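/- arXiv:1211.4924 — 3 statements merged into one kernel-verified Lean document; each statement's English description precedes it below -/
import Mathlib

section
/- Let T be a tree on n ≥ 4 vertices and let u, v, w be three distinct vertices of T such that uv is an edge of T, u has degree 1 in T, deg_T(w) ≥ deg_T(v), and the distance between v and w in T is 2. Let T' = T − uv + uw be the tree obtained from T by deleting the edge uv and adding the edge uw. Then S_i(T) = S_i(T') for i = 0, 1, 2, 3 and S_4(T) < S_4(T'); in particular T ≺_s T'. -/
open SimpleGraph

open scoped Classical in
/-- The adjacency matrix of a simple graph, with real entries. -/
noncomputable def adjMat {V : Type*} [Fintype V] (G : SimpleGraph V) : Matrix V V ℝ :=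
  Matrix.of fun a b => if G.Adj a b then 1 else 0

/-- The `k`-th spectral moment `S_k(G) = tr(A(G)^k)`. -/
noncomputable def spectralMoment {V : Type*} [Fintype V] [DecidableEq V]
    (G : SimpleGraph V) (k : ℕ) : ℝ :=
  Matrix.trace (adjMat G ^ k)

/-- `SLt G₁ G₂` means `G₁ ≺_s G₂`: for some `k` with `1 ≤ k ≤ n - 1`,
`S_i(G₁) = S_i(G₂)` for all `i < k` and `S_k(G₁) < S_k(G₂)`. -/
def SLt {V : Type*} [Fintype V] [DecidableEq V] (G₁ G₂ : SimpleGraph V) : Prop :=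
  ∃ k : ℕ, 1 ≤ k ∧ k ≤ Fintype.card V - 1 ∧
    (∀ i < k, spectralMoment G₁ i = spectralMoment G₂ i) ∧
    spectralMoment G₁ k < spectralMoment G₂ k

/-!
Deleting the edge `uv` leaves a graph `G` in which `u` is isolated, and `T = G ⊔ uv`,
`T' = G ⊔ uw`. With `A` the adjacency matrix of `G` and `E_x = e_u e_xᵀ + e_x e_uᵀ`, expand
`tr ((A + E_x) ^ k)` for `k ≤ 4` using the cyclicity of the trace: since the `u`-th row and column
of `A` vanish, every mixed term is zero except `tr (A² E_x²) = deg_G x`. Hence `S_k(G ⊔ ux)` does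
not depend on `x` for `k ≤ 3`, while `S_4(G ⊔ ux) = S_4(G) + 4 deg_G x + 2`, and
`deg_G v = deg_T v - 1 < deg_T w = deg_G w`. Finally `v` has the two neighbours `u` and the middle
vertex of a `v`–`w` path, so `w` has at least two neighbours outside `{u, v, w}` and `n ≥ 5`,
which makes `k = 4` admissible in the S-order.
-/

namespace Matrix

variable {n R : Type*} [Fintype n] [DecidableEq n] [CommRing R]

theorem trace_add_sq (A P : Matrix n n R) :
    trace ((A + P) ^ 2) = trace (A ^ 2) + 2 * trace (A * P) + trace (P ^ 2) := by
  rw [show (A + P) ^ 2 = A ^ 2 + A * P + P * A + P ^ 2 by noncomm_ring]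
  simp only [trace_add, trace_mul_comm P A]
  ring

theorem trace_add_pow_three (A P : Matrix n n R) :
    trace ((A + P) ^ 3) = trace (A ^ 3) + 3 * trace (A ^ 2 * P) + 3 * trace (A * P ^ 2)
      + trace (P ^ 3) := by
  rw [show (A + P) ^ 3 = A ^ 3 + (A ^ 2 * P + A * P * A + P * A ^ 2)
      + (A * P ^ 2 + P * A * P + P ^ 2 * A) + P ^ 3 by noncomm_ring]
  simp only [trace_add, trace_mul_comm P (A ^ 2), trace_mul_comm (P ^ 2) A,
    trace_mul_cycle A P A, trace_mul_cycle P A P, ← sq]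
  ring

theorem trace_add_pow_four (A P : Matrix n n R) :
    trace ((A + P) ^ 4) = trace (A ^ 4) + 4 * trace (A ^ 3 * P) + 4 * trace (A ^ 2 * P ^ 2)
      + 2 * trace (A * P * A * P) + 4 * trace (A * P ^ 3) + trace (P ^ 4) := by
  rw [show (A + P) ^ 4 = A ^ 4
      + (A ^ 3 * P + A ^ 2 * P * A + A * P * A ^ 2 + P * A ^ 3)
      + (A ^ 2 * P ^ 2 + A * P ^ 2 * A + P ^ 2 * A ^ 2 + P * A ^ 2 * P)
      + (A * P * A * P + P * A * P * A)
      + (A * P ^ 3 + P * A * P ^ 2 + P ^ 2 * A * P + P ^ 3 * A) + P ^ 4 by noncomm_ring]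
  simp only [trace_add, trace_mul_comm P (A ^ 3), trace_mul_comm (P ^ 3) A,
    trace_mul_comm (P ^ 2) (A ^ 2), trace_mul_cycle (A ^ 2) P A, trace_mul_cycle A P (A ^ 2),
    trace_mul_cycle A (P ^ 2) A, trace_mul_cycle P (A ^ 2) P, trace_mul_cycle P A (P ^ 2),
    trace_mul_cycle (P ^ 2) A P, trace_mul_comm (P * A * P) A, ← mul_assoc, ← sq, ← pow_succ,
    ← pow_succ']
  ring

def edgeMatrix (i j : n) : Matrix n n R := single i j 1 + single j i 1

section edgeMatrix

variable {u x : n}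

theorem trace_mul_edgeMatrix (N : Matrix n n R) (u x : n) :
    trace (N * edgeMatrix u x) = N x u + N u x := by
  simp [edgeMatrix, mul_add, trace_mul_single]

theorem edgeMatrix_sq (hux : u ≠ x) :
    edgeMatrix (R := R) u x ^ 2 = single u u 1 + single x x 1 := by
  simp [edgeMatrix, sq, add_mul, mul_add, hux, hux.symm, add_comm]

theorem edgeMatrix_pow_three (hux : u ≠ x) :
    edgeMatrix (R := R) u x ^ 3 = edgeMatrix u x := by
  rw [pow_succ, edgeMatrix_sq hux]
  simp [edgeMatrix, add_mul, mul_add, hux, hux.symm]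

theorem trace_edgeMatrix (hux : u ≠ x) : trace (edgeMatrix (R := R) u x) = 0 := by
  simp [edgeMatrix, hux, hux.symm]

theorem trace_edgeMatrix_sq (hux : u ≠ x) : trace (edgeMatrix (R := R) u x ^ 2) = 2 := by
  simp [edgeMatrix_sq hux, one_add_one_eq_two]

theorem trace_mul_edgeMatrix_sq (N : Matrix n n R) (hux : u ≠ x) :
    trace (N * edgeMatrix u x ^ 2) = N u u + N x x := by
  simp [edgeMatrix_sq hux, mul_add, trace_mul_single]

variable {A : Matrix n n R} (hrow : ∀ z, A u z = 0) (hcol : ∀ z, A z u = 0)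
include hrow hcol

theorem trace_add_edgeMatrix_sq (hux : u ≠ x) :
    trace ((A + edgeMatrix u x) ^ 2) = trace (A ^ 2) + 2 := by
  rw [trace_add_sq, trace_mul_edgeMatrix, hrow, hcol, trace_edgeMatrix_sq hux]
  ring

theorem trace_add_edgeMatrix_pow_three (hux : u ≠ x) (hx : A x x = 0) :
    trace ((A + edgeMatrix u x) ^ 3) = trace (A ^ 3) := by
  rw [trace_add_pow_three, trace_mul_edgeMatrix, trace_mul_edgeMatrix_sq _ hux,
    edgeMatrix_pow_three hux, trace_edgeMatrix hux, hrow, hx]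
  simp [sq, mul_apply, hrow, hcol]

theorem trace_add_edgeMatrix_pow_four (hux : u ≠ x) :
    trace ((A + edgeMatrix u x) ^ 4) = trace (A ^ 4) + 4 * (A ^ 2) x x + 2 := by
  rw [trace_add_pow_four, trace_mul_edgeMatrix, trace_mul_edgeMatrix_sq _ hux,
    trace_mul_edgeMatrix, pow_succ (edgeMatrix u x) 3, edgeMatrix_pow_three hux,
    trace_mul_edgeMatrix, ← sq, trace_edgeMatrix_sq hux]
  simp [pow_succ, mul_apply, hrow, hcol]

end edgeMatrix

end Matrix

namespace SimpleGraph

variable {V : Type*} {G H : SimpleGraph V} {u v w x y : V}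

theorem neighborSet_sup_edge_of_ne (hyu : y ≠ u) (hyx : y ≠ x) :
    (G ⊔ edge u x).neighborSet y = G.neighborSet y := by
  ext z
  simp [edge_adj, hyu, hyx]

theorem fromEdgeSet_edgeSet_sdiff_sup_edge (h : G.Adj u v) :
    fromEdgeSet (G.edgeSet \ {s(u, v)}) ⊔ edge u v = G := by
  rw [edge, ← fromEdgeSet_union,
    Set.sdiff_union_of_subset (s := G.edgeSet) (Set.singleton_subset_iff.mpr h), fromEdgeSet_edgeSet]

theorem not_adj_fromEdgeSet_edgeSet_sdiff (hleaf : ∀ z, G.Adj u z → z = v) (z : V) :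
    ¬ (fromEdgeSet (G.edgeSet \ {s(u, v)})).Adj u z :=
  fun ⟨⟨hz, hne⟩, _⟩ => hne (by rw [hleaf z hz]; rfl)

variable [Fintype V]

theorem adjMat_apply (G : SimpleGraph V) [DecidableRel G.Adj] (a b : V) :
    adjMat G a b = if G.Adj a b then 1 else 0 := by
  simp [adjMat]

theorem adjMat_sup (h : Disjoint G H) : adjMat (G ⊔ H) = adjMat G + adjMat H := by
  classical
  ext a b
  have : ¬ (G.Adj a b ∧ H.Adj a b) := fun hGH => h.le_bot (show (G ⊓ H).Adj a b from hGH)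
  by_cases hG : G.Adj a b <;> by_cases hH : H.Adj a b <;> simp_all [adjMat_apply]

theorem adjMat_apply_eq_zero_of_isolated_left (hu : ∀ z, ¬ G.Adj u z) (z : V) :
    adjMat G u z = 0 := by
  classical
  simp [adjMat_apply, hu]

theorem adjMat_apply_eq_zero_of_isolated_right (hu : ∀ z, ¬ G.Adj u z) (z : V) :
    adjMat G z u = 0 := by
  classical
  simp [adjMat_apply, G.adj_comm z u, hu]

theorem ncard_neighborSet_sup_edge (hu : ∀ z, ¬ G.Adj u z) (hux : u ≠ x) :
    ((G ⊔ edge u x).neighborSet x).ncard = (G.neighborSet x).ncard + 1 := by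
  have : (G ⊔ edge u x).neighborSet x = insert u (G.neighborSet x) := by
    ext z
    simp only [mem_neighborSet, sup_adj, edge_adj, Set.mem_insert_iff]
    grind
  rw [this, Set.ncard_insert_of_notMem (show u ∉ G.neighborSet x from fun h => hu x h.symm)]

theorem ncard_neighborSet_add_three_le_card (huv : u ≠ v) (huw : u ≠ w) (hvw : v ≠ w)
    (hwu : ¬ G.Adj w u) (hwv : ¬ G.Adj w v) :
    (G.neighborSet w).ncard + 3 ≤ Fintype.card V := by
  have hdisj : Disjoint (G.neighborSet w) {u, v, w} := by
    simp [Set.disjoint_insert_right, hwu, hwv]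
  have htriple : ({u, v, w} : Set V).ncard = 3 := by
    rw [Set.ncard_insert_of_notMem (by simp [huv, huw]), Set.ncard_pair hvw]
  rw [← htriple, ← Set.ncard_union_eq hdisj, ← Nat.card_eq_fintype_card]
  exact Set.ncard_le_card _

theorem five_le_card_of_leaf_of_dist_eq_two (hadj : G.Adj u v) (hleaf : ∀ z, G.Adj u z → z = v)
    (huw : u ≠ w) (hvw : v ≠ w) (hdist : G.dist v w = 2)
    (hdeg : (G.neighborSet v).ncard ≤ (G.neighborSet w).ncard) : 5 ≤ Fintype.card V := by
  have hedist : G.edist v w = 2 := by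
    rw [← (Reachable.of_dist_ne_zero (by omega)).coe_dist_eq_edist, hdist]; rfl
  obtain ⟨-, hnvw, x, hvx, hwx⟩ := edist_eq_two_iff.mp hedist
  have hxu : x ≠ u := fun h => hvw (hleaf w (h ▸ hwx).symm).symm
  have hv : 2 ≤ (G.neighborSet v).ncard := by
    rw [← Set.ncard_pair hxu]
    exact Set.ncard_le_ncard (Set.insert_subset_iff.mpr ⟨hvx, by simpa using hadj.symm⟩)
  have hw := ncard_neighborSet_add_three_le_card hadj.ne huw hvw
    (fun h => hvw (hleaf w h.symm).symm) (fun h => hnvw h.symm)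
  omega

variable [DecidableEq V]

theorem adjMat_edge (hux : u ≠ x) : adjMat (edge u x) = Matrix.edgeMatrix u x := by
  ext a b
  simp only [adjMat_apply, edge_adj, Matrix.edgeMatrix, Matrix.add_apply, Matrix.single_apply]
  grind

theorem adjMat_sq_apply_self (G : SimpleGraph V) (x : V) :
    (adjMat G ^ 2) x x = (G.neighborSet x).ncard := by
  classical
  have : adjMat G = G.adjMatrix ℝ := by ext a b; simp [adjMat_apply]
  rw [this, sq, adjMatrix_mul_self_apply_self, ← card_neighborSet_eq_degree,
    Set.ncard_eq_toFinset_card', Set.toFinset_card]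

theorem adjMat_sup_edge_of_isolated (hu : ∀ z, ¬ G.Adj u z) (hux : u ≠ x) :
    adjMat (G ⊔ edge u x) = adjMat G + Matrix.edgeMatrix u x := by
  rw [adjMat_sup (G.disjoint_edge.mpr (hu x)), adjMat_edge hux]

theorem spectralMoment_sup_edge_of_isolated_of_lt_four (hu : ∀ z, ¬ G.Adj u z) (hux : u ≠ x)
    (huy : u ≠ y) {k : ℕ} (hk : k < 4) :
    spectralMoment (G ⊔ edge u x) k = spectralMoment (G ⊔ edge u y) k := by
  classical
  have hrow := adjMat_apply_eq_zero_of_isolated_left hu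
  have hcol := adjMat_apply_eq_zero_of_isolated_right hu
  have hdiag : ∀ z, adjMat G z z = 0 := by simp [adjMat_apply]
  simp only [spectralMoment, adjMat_sup_edge_of_isolated hu hux,
    adjMat_sup_edge_of_isolated hu huy]
  interval_cases k
  · simp
  · simp [Matrix.trace_edgeMatrix hux, Matrix.trace_edgeMatrix huy]
  · rw [Matrix.trace_add_edgeMatrix_sq hrow hcol hux, Matrix.trace_add_edgeMatrix_sq hrow hcol huy]
  · rw [Matrix.trace_add_edgeMatrix_pow_three hrow hcol hux (hdiag x),
      Matrix.trace_add_edgeMatrix_pow_three hrow hcol huy (hdiag y)]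

theorem spectralMoment_four_sup_edge_of_isolated (hu : ∀ z, ¬ G.Adj u z) (hux : u ≠ x) :
    spectralMoment (G ⊔ edge u x) 4 = spectralMoment G 4 + 4 * (G.neighborSet x).ncard + 2 := by
  rw [spectralMoment, adjMat_sup_edge_of_isolated hu hux,
    Matrix.trace_add_edgeMatrix_pow_four (adjMat_apply_eq_zero_of_isolated_left hu)
      (adjMat_apply_eq_zero_of_isolated_right hu) hux, adjMat_sq_apply_self, spectralMoment]

end SimpleGraph

theorem stmt_0_general {V : Type*} [Fintype V] [DecidableEq V] (T : SimpleGraph V)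
    (u v w : V) (huv : u ≠ v) (huw : u ≠ w) (hvw : v ≠ w)
    (hadj : T.Adj u v)
    (hdegu : (T.neighborSet u).ncard = 1)
    (hdeg : (T.neighborSet v).ncard ≤ (T.neighborSet w).ncard)
    (hdist : T.dist v w = 2)
    (T' : SimpleGraph V)
    (hT' : T' = SimpleGraph.fromEdgeSet ((T.edgeSet \ {s(u, v)}) ∪ {s(u, w)})) :
    (∀ i < 4, spectralMoment T i = spectralMoment T' i) ∧
    spectralMoment T 4 < spectralMoment T' 4 ∧ SLt T T' := by
  have hleaf : ∀ z, T.Adj u z → z = v := fun z hz =>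
    Set.ncard_le_one_iff_subsingleton.mp hdegu.le hz hadj
  set G := fromEdgeSet (T.edgeSet \ {s(u, v)})
  have hG := not_adj_fromEdgeSet_edgeSet_sdiff hleaf
  have hTG : T = G ⊔ edge u v := (fromEdgeSet_edgeSet_sdiff_sup_edge hadj).symm
  have hT'G : T' = G ⊔ edge u w := by rw [hT', fromEdgeSet_union]; rfl
  have hlow : ∀ i < 4, spectralMoment T i = spectralMoment T' i := fun i hi => by
    rw [hTG, hT'G, spectralMoment_sup_edge_of_isolated_of_lt_four hG huv huw hi]
  have hfour : spectralMoment T 4 < spectralMoment T' 4 := by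
    have hdeg₀ : (G.neighborSet v).ncard + 1 ≤ (G.neighborSet w).ncard := by
      rwa [hTG, ncard_neighborSet_sup_edge hG huv,
        neighborSet_sup_edge_of_ne huw.symm hvw.symm] at hdeg
    rw [hTG, hT'G, spectralMoment_four_sup_edge_of_isolated hG huv,
      spectralMoment_four_sup_edge_of_isolated hG huw]
    have : ((G.neighborSet v).ncard : ℝ) + 1 ≤ (G.neighborSet w).ncard := by exact_mod_cast hdeg₀
    linarith
  have hcard := five_le_card_of_leaf_of_dist_eq_two hadj hleaf huw hvw hdist hdeg
  exact ⟨hlow, hfour, 4, by norm_num, by omega, hlow, hfour⟩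

/-- Operation I. Let `T` be a tree on `n ≥ 4` vertices and `u, v, w`
distinct vertices with `uv ∈ E(T)`, `deg_T(u) = 1`, `deg_T(w) ≥ deg_T(v)` and
`dist_T(v, w) = 2`. If `T' = T - uv + uw`, then `S_i(T) = S_i(T')` for `i = 0,1,2,3`,
`S_4(T) < S_4(T')`, and `T ≺_s T'`. -/
theorem stmt_0 {V : Type*} [Fintype V] [DecidableEq V] (n : ℕ) (hn : 4 ≤ n)
    (hcard : Fintype.card V = n) (T : SimpleGraph V) (hT : T.IsTree)
    (u v w : V) (huv : u ≠ v) (huw : u ≠ w) (hvw : v ≠ w)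
    (hadj : T.Adj u v)
    (hdegu : (T.neighborSet u).ncard = 1)
    (hdeg : (T.neighborSet v).ncard ≤ (T.neighborSet w).ncard)
    (hdist : T.dist v w = 2)
    (T' : SimpleGraph V)
    (hT' : T' = SimpleGraph.fromEdgeSet ((T.edgeSet \ {s(u, v)}) ∪ {s(u, w)})) :
    (∀ i < 4, spectralMoment T i = spectralMoment T' i) ∧
    spectralMoment T 4 < spectralMoment T' 4 ∧ SLt T T' :=
  stmt_0_general T u v w huv huw hvw hadj hdegu hdeg hdist T' hT'
end

section
/- Let 4 ≤ p < q and n = p + q. Then S_i(D_{p,q}^{0,1}) = S_i(B_{p,q}^{0,1}) for i = 0, 1, 2, 3 and S_4(B_{p,q}^{0,1}) − S_4(D_{p,q}^{0,1}) = 4(q − p) > 0; in particular D_{p,q}^{0,1} ≺_s B_{p,q}^{0,1}. -/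
open SimpleGraph

/-- The tree `B_{p,q}^{k,l}` on `p + q` vertices: vertex `0 = u` is adjacent to `1 = v`
and to the `q - 1` vertices `2, …, q`; the distinguished neighbor `2` of `u` carries the
`k` pendant leaves `q+1, …, q+k`; the `l` neighbors `3, …, l+2` of `u` carry one pendant
leaf each (`q+k+j` is attached to `j+2` for `1 ≤ j ≤ l`); and `v` carries the
`p - k - l - 1` pendant leaves `q+k+l+1, …, p+q-1`. -/
def BTree (p q k l : ℕ) : SimpleGraph (Fin (p + q)) :=
  SimpleGraph.fromRel (fun a b =>
    (a.val = 0 ∧ b.val = 1) ∨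
    (a.val = 0 ∧ 2 ≤ b.val ∧ b.val ≤ q) ∨
    (a.val = 2 ∧ q + 1 ≤ b.val ∧ b.val ≤ q + k) ∨
    (q + k + 1 ≤ b.val ∧ b.val ≤ q + k + l ∧ a.val = b.val - (q + k) + 2) ∨
    (a.val = 1 ∧ q + k + l + 1 ≤ b.val))

/-- The tree `D_{p,q}^{k,l}` on `p + q` vertices: vertex `1 = v` is adjacent to `0 = u`
and to the `p - 1` vertices `2, …, p`; the distinguished neighbor `2` of `v` carries the
`k` pendant leaves `p+1, …, p+k`; the `l` neighbors `3, …, l+2` of `v` carry one pendant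
leaf each; and `u` carries the `q - k - l - 1` pendant leaves `p+k+l+1, …, p+q-1`. -/
def DTree (p q k l : ℕ) : SimpleGraph (Fin (p + q)) :=
  SimpleGraph.fromRel (fun a b =>
    (a.val = 0 ∧ b.val = 1) ∨
    (a.val = 1 ∧ 2 ≤ b.val ∧ b.val ≤ p) ∨
    (a.val = 2 ∧ p + 1 ≤ b.val ∧ b.val ≤ p + k) ∨
    (p + k + 1 ≤ b.val ∧ b.val ≤ p + k + l ∧ a.val = b.val - (p + k) + 2) ∨
    (a.val = 0 ∧ p + k + l + 1 ≤ b.val))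

/-- `T ∈ 𝒯_{p+q}^{p,q}`: `T` is a tree on `p + q` vertices with a `(p,q)`-bipartition. -/
def TreeBip (p q : ℕ) (G : SimpleGraph (Fin (p + q))) : Prop :=
  G.IsTree ∧ ∃ A : Finset (Fin (p + q)), A.card = p ∧
    ∀ ⦃x y : Fin (p + q)⦄, G.Adj x y → (x ∈ A ↔ y ∉ A)

/-! Both trees split into six classes (the two centres, the neighbour of the first centre carrying
a leaf, that leaf, the other neighbours of the first centre and the leaves of the second one) so that
the adjacency matrix is `P M Pᵀ` for the class-indicator matrix `P` and one fixed `0/1` pattern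
`M`. Since `tr ((P M Pᵀ) ^ k) = tr ((M Pᵀ P) ^ k)` and `Pᵀ P` is the diagonal of class sizes,
every spectral moment is the trace of a power of the same `6 × 6` quotient matrix, evaluated at
class sizes `(x, y) = (q - 2, p - 2)` for `B` and `(p - 2, q - 2)` for `D`. The traces of its
first three powers are symmetric in `x` and `y`, while swapping them changes the trace of the
fourth power by `4 (x - y)`. -/

open Matrix Finset

theorem Matrix.mul_pow_succ_mul {m n R : Type*} [Fintype m] [Fintype n] [DecidableEq m]
    [DecidableEq n] [Semiring R] (A : Matrix m n R) (B : Matrix n m R) (k : ℕ) :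
    (A * B) ^ (k + 1) = A * (B * A) ^ k * B := by
  induction k with
  | zero => simp
  | succ k ih => rw [pow_succ, ih, pow_succ]; simp only [Matrix.mul_assoc]

theorem Matrix.trace_mul_pow_succ_comm {m n R : Type*} [Fintype m] [Fintype n] [DecidableEq m]
    [DecidableEq n] [CommSemiring R] (A : Matrix m n R) (B : Matrix n m R) (k : ℕ) :
    trace ((A * B) ^ (k + 1)) = trace ((B * A) ^ (k + 1)) := by
  rw [mul_pow_succ_mul, Matrix.mul_assoc, trace_mul_comm, Matrix.mul_assoc, ← pow_succ]

theorem Matrix.trace_pow_submatrix {V W R : Type*} [Fintype V] [Fintype W] [DecidableEq V]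
    [DecidableEq W] [CommSemiring R] (M : Matrix W W R) (c : V → W) {k : ℕ} (hk : k ≠ 0) :
    trace (M.submatrix c c ^ k) = trace ((M * diagonal fun j => (#{a | c a = j} : R)) ^ k) := by
  obtain ⟨k, rfl⟩ := Nat.exists_eq_succ_of_ne_zero hk
  -- `(1 : Matrix W W R).submatrix c id` is the indicator matrix of the classes `c a`.
  have hM : M.submatrix c c =
      (1 : Matrix W W R).submatrix c id * (M * (1 : Matrix W W R).submatrix id c) := by
    ext a b
    simp [mul_apply, one_apply]
  have hD : (1 : Matrix W W R).submatrix id c * (1 : Matrix W W R).submatrix c id =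
      diagonal fun j => (#{a | c a = j} : R) := by
    ext i j
    simp only [mul_apply, submatrix_apply, id, one_apply, diagonal_apply, ite_mul, one_mul,
      zero_mul, ← Finset.sum_filter]
    split_ifs with hij
    · subst hij
      simp [Finset.filter_filter, eq_comm]
    · exact Finset.sum_eq_zero fun a ha => by grind
  rw [hM, trace_mul_pow_succ_comm, Matrix.mul_assoc, hD]

theorem Fin.card_filter_eq_card_of_forall_iff {n : ℕ} (P : Fin n → Prop) [DecidablePred P]
    (s : Finset ℕ) (hP : ∀ a : Fin n, P a ↔ (a : ℕ) ∈ s) (hs : ∀ x ∈ s, x < n) :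
    #{a | P a} = #s := by
  rw [← card_map Fin.valEmbedding]
  congr 1
  ext x
  simp only [mem_map, mem_filter, mem_univ, true_and, Fin.valEmbedding_apply]
  exact ⟨fun ⟨a, ha, hax⟩ => hax ▸ (hP a).1 ha,
    fun hx => ⟨⟨x, hs x hx⟩, (hP _).2 hx, rfl⟩⟩

/-- Class `0` is the centre `u`, class `1` the centre `v`, class `2` the neighbour `3` of `u`
carrying the leaf `r + 1` (class `3`), class `4` the other neighbours `2, …, r` of `u`, and
class `5` the leaves of `v`. -/
def vertexClass (u v r : ℕ) {n : ℕ} (a : Fin n) : Fin 6 :=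
  if a.val = u then 0 else if a.val = v then 1 else if a.val = 3 then 2
  else if a.val = r + 1 then 3 else if a.val ≤ r then 4 else 5

theorem card_vertexClass {u v r n : ℕ} (hu : u < 2) (hv : v < 2) (huv : u ≠ v) (hr : 3 ≤ r)
    (hn : r + 2 ≤ n) (j : Fin 6) :
    #{a : Fin n | vertexClass u v r a = j} = ![1, 1, 1, 1, r - 2, n - r - 2] j := by
  have key (s : Finset ℕ) (hs : ∀ x ∈ s, x < n)
      (h : ∀ a : Fin n, vertexClass u v r a = j ↔ (a : ℕ) ∈ s) :
      #{a : Fin n | vertexClass u v r a = j} = #s :=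
    Fin.card_filter_eq_card_of_forall_iff _ s h hs
  fin_cases j
  · rw [key {u} (by simp; omega) (fun a => by unfold vertexClass; split_ifs <;> simp <;> omega)]
    rfl
  · rw [key {v} (by simp; omega) (fun a => by unfold vertexClass; split_ifs <;> simp <;> omega)]
    rfl
  · rw [key {3} (by simp; omega) (fun a => by unfold vertexClass; split_ifs <;> simp <;> omega)]
    rfl
  · rw [key {r + 1} (by simp; omega)
      (fun a => by unfold vertexClass; split_ifs <;> simp <;> omega)]
    rfl
  · rw [key ((Icc 2 r).erase 3) (by simp; omega)
      (fun a => by unfold vertexClass; split_ifs <;> simp <;> omega),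
      card_erase_of_mem (by simp; omega), Nat.card_Icc]
    change r + 1 - 2 - 1 = r - 2
    omega
  · rw [key (Icc (r + 2) (n - 1)) (by simp; omega)
      (fun a => by unfold vertexClass; split_ifs <;> simp <;> omega), Nat.card_Icc]
    change n - 1 + 1 - (r + 2) = n - r - 2
    omega

/-- Entry `(i, j)` counts the neighbours in class `j` of a vertex in class `i` of `vertexClass`,
when classes `4` and `5` have sizes `x` and `y`. -/
def quotientMatrix {R : Type*} [Zero R] [One R] (x y : R) : Matrix (Fin 6) (Fin 6) R :=
  !![0, 1, 1, 0, x, 0;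
     1, 0, 0, 0, 0, y;
     1, 0, 0, 1, 0, 0;
     0, 0, 1, 0, 0, 0;
     1, 0, 0, 0, 0, 0;
     0, 1, 0, 0, 0, 0]

section quotientMatrix

variable {R : Type*} [CommRing R] (x y : R)

theorem quotientMatrix_one_one_mul_diagonal :
    quotientMatrix (1 : R) 1 * diagonal ![1, 1, 1, 1, x, y] = quotientMatrix x y := by
  ext i j
  fin_cases i <;> fin_cases j <;> simp [quotientMatrix]

theorem trace_quotientMatrix : trace (quotientMatrix x y) = 0 := by
  simp [quotientMatrix, trace, Fin.sum_univ_succ]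

theorem trace_quotientMatrix_pow_two :
    trace (quotientMatrix x y ^ 2) = 2 * x + 2 * y + 6 := by
  simp only [quotientMatrix, sq]
  simp [trace, Fin.sum_univ_succ]
  ring

theorem trace_quotientMatrix_pow_three : trace (quotientMatrix x y ^ 3) = 0 := by
  simp only [quotientMatrix, pow_succ, pow_zero, Matrix.one_mul]
  simp [trace, Fin.sum_univ_succ]

theorem trace_quotientMatrix_pow_four :
    trace (quotientMatrix x y ^ 4) = 2 * x ^ 2 + 8 * x + 2 * y ^ 2 + 4 * y + 14 := by
  rw [show quotientMatrix x y ^ 4 = quotientMatrix x y ^ 2 * quotientMatrix x y ^ 2 by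
    rw [← pow_add]]
  simp only [quotientMatrix, sq]
  simp [trace, Fin.sum_univ_succ]
  ring

end quotientMatrix

theorem adjMat_BTree {p q : ℕ} (hq : 3 ≤ q) :
    adjMat (BTree p q 0 1) =
      (quotientMatrix 1 1).submatrix (vertexClass 0 1 q) (vertexClass 0 1 q) := by
  ext a b
  simp only [adjMat, BTree, SimpleGraph.fromRel_adj, of_apply, submatrix_apply, ne_eq,
    Fin.ext_iff]
  unfold vertexClass
  have := a.isLt
  have := b.isLt
  split_ifs <;> simp [quotientMatrix] <;> omega

theorem adjMat_DTree {p q : ℕ} (hp : 3 ≤ p) :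
    adjMat (DTree p q 0 1) =
      (quotientMatrix 1 1).submatrix (vertexClass 1 0 p) (vertexClass 1 0 p) := by
  ext a b
  simp only [adjMat, DTree, SimpleGraph.fromRel_adj, of_apply, submatrix_apply, ne_eq,
    Fin.ext_iff]
  unfold vertexClass
  have := a.isLt
  have := b.isLt
  split_ifs <;> simp [quotientMatrix] <;> omega

theorem spectralMoment_BTree {p q k : ℕ} (hp : 2 ≤ p) (hq : 3 ≤ q) (hk : k ≠ 0) :
    spectralMoment (BTree p q 0 1) k =
      trace (quotientMatrix ((q : ℝ) - 2) ((p : ℝ) - 2) ^ k) := by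
  have hcard : (fun j => (#{a : Fin (p + q) | vertexClass 0 1 q a = j} : ℝ)) =
      ![1, 1, 1, 1, (q : ℝ) - 2, (p : ℝ) - 2] := by
    ext j
    rw [card_vertexClass (by norm_num) (by norm_num) (by norm_num) hq (by omega)]
    fin_cases j <;> simp [Nat.cast_sub, hp, hq.trans' (by norm_num : 2 ≤ 3)]
  rw [spectralMoment, adjMat_BTree hq, trace_pow_submatrix _ _ hk, hcard,
    quotientMatrix_one_one_mul_diagonal]

theorem spectralMoment_DTree {p q k : ℕ} (hp : 3 ≤ p) (hq : 2 ≤ q) (hk : k ≠ 0) :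
    spectralMoment (DTree p q 0 1) k =
      trace (quotientMatrix ((p : ℝ) - 2) ((q : ℝ) - 2) ^ k) := by
  have hcard : (fun j => (#{a : Fin (p + q) | vertexClass 1 0 p a = j} : ℝ)) =
      ![1, 1, 1, 1, (p : ℝ) - 2, (q : ℝ) - 2] := by
    ext j
    rw [card_vertexClass (by norm_num) (by norm_num) (by norm_num) hp (by omega)]
    fin_cases j <;> simp [Nat.cast_sub, hq, hp.trans' (by norm_num : 2 ≤ 3)]
  rw [spectralMoment, adjMat_DTree hp, trace_pow_submatrix _ _ hk, hcard,
    quotientMatrix_one_one_mul_diagonal]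

/-- For `4 ≤ p < q` and `n = p + q`:
`S_i(D_{p,q}^{0,1}) = S_i(B_{p,q}^{0,1})` for `i = 0,1,2,3`, and
`S_4(B_{p,q}^{0,1}) - S_4(D_{p,q}^{0,1}) = 4(q - p) > 0`; in particular
`D_{p,q}^{0,1} ≺_s B_{p,q}^{0,1}`. -/
theorem stmt_15 (p q : ℕ) (hp : 4 ≤ p) (hpq : p < q) :
    (∀ i < 4, spectralMoment (DTree p q 0 1) i = spectralMoment (BTree p q 0 1) i) ∧
    spectralMoment (BTree p q 0 1) 4 - spectralMoment (DTree p q 0 1) 4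
      = 4 * ((q : ℝ) - (p : ℝ)) ∧
    0 < spectralMoment (BTree p q 0 1) 4 - spectralMoment (DTree p q 0 1) 4 ∧
    SLt (DTree p q 0 1) (BTree p q 0 1) := by
  have hB {k : ℕ} := spectralMoment_BTree (p := p) (q := q) (k := k) (by omega) (by omega)
  have hD {k : ℕ} := spectralMoment_DTree (p := p) (q := q) (k := k) (by omega) (by omega)
  have hlow : ∀ i < 4, spectralMoment (DTree p q 0 1) i = spectralMoment (BTree p q 0 1) i := by
    intro i hi
    interval_cases i
    · rfl
    · simp only [hB one_ne_zero, hD one_ne_zero, pow_one, trace_quotientMatrix]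
    · rw [hB two_ne_zero, hD two_ne_zero, trace_quotientMatrix_pow_two,
        trace_quotientMatrix_pow_two]
      ring
    · rw [hB three_ne_zero, hD three_ne_zero, trace_quotientMatrix_pow_three,
        trace_quotientMatrix_pow_three]
  have h4 : spectralMoment (BTree p q 0 1) 4 - spectralMoment (DTree p q 0 1) 4
      = 4 * ((q : ℝ) - (p : ℝ)) := by
    rw [hB four_ne_zero, hD four_ne_zero, trace_quotientMatrix_pow_four,
      trace_quotientMatrix_pow_four]
    ring
  have hpos : 0 < spectralMoment (BTree p q 0 1) 4 - spectralMoment (DTree p q 0 1) 4 := by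
    rw [h4]
    have : (p : ℝ) < q := by exact_mod_cast hpq
    linarith
  exact ⟨hlow, h4, hpos, 4, by norm_num, by simp only [Fintype.card_fin]; omega, hlow,
    sub_pos.1 hpos⟩
end

section
/- Let 4 ≤ p < q and n = p + q. Then S_i(D_{p,q}^{2,0}) = S_i(B_{p,q}^{2,0}) for i = 0, 1, 2, 3 and S_4(B_{p,q}^{2,0}) − S_4(D_{p,q}^{2,0}) = 8(q − p) > 0; in particular D_{p,q}^{2,0} ≺_s B_{p,q}^{2,0}. -/
open SimpleGraph

/-!
In a graph where two distinct vertices never have two common neighbours, `A²` has diagonal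
`d_v` and off-diagonal entries in `{0, 1}`; together with `Σ_{u,w} (A²)_{uw} = Σ_v d_v²` this gives
`tr A⁴ = Σ_{u,w} (A²)_{uw}² = Σ_v (2 d_v² - d_v)`;
if moreover the graph is triangle-free then `tr A³ = 0`, and always `tr A² = Σ_v d_v`.
Both trees are labelled so that every vertex has at most one neighbour of smaller label, which
rules out triangles and 4-cycles (look at the largest label on the cycle). Hence their first four
spectral moments depend only on the degree sequences, which agree except that the two centres
have degrees `q, p - 2` in `B` and `p, q - 2` in `D`; this changes `Σ_v (2 d_v² - d_v)` by
`2 (q² - (q-2)²) - 2 (p² - (p-2)²) = 8 (q - p)` and leaves `Σ_v d_v` unchanged.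
-/

open Finset Matrix

def AtMostOneLowerNeighbor {V : Type*} [LinearOrder V] (G : SimpleGraph V) : Prop :=
  ∀ ⦃x y z : V⦄, G.Adj x y → G.Adj x z → y < x → z < x → y = z

namespace AtMostOneLowerNeighbor

variable {V : Type*} [LinearOrder V] {G : SimpleGraph V}

theorem cliqueFree_three (h : AtMostOneLowerNeighbor G) : G.CliqueFree 3 := by
  intro s hs
  obtain ⟨a, b, c, hab, hac, hbc, -⟩ := is3Clique_iff.mp hs
  rcases lt_or_gt_of_ne hbc.ne with hbc' | hcb'
  · rcases lt_or_gt_of_ne hac.ne with hac' | hca'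
    · exact hab.ne (h hac.symm hbc.symm hac' hbc')
    · exact hbc.ne (h hab hac (hbc'.trans hca') hca')
  · rcases lt_or_gt_of_ne hab.ne with hab' | hba'
    · exact hac.ne (h hab.symm hbc hab' hcb')
    · exact hbc.ne (h hab hac hba' (hcb'.trans hba'))

theorem eq_of_adj_of_adj (h : AtMostOneLowerNeighbor G) {u w x y : V} (huw : u ≠ w)
    (hux : G.Adj u x) (hwx : G.Adj w x) (huy : G.Adj u y) (hwy : G.Adj w y) : x = y := by
  wlog hlt : u < w generalizing u w
  · exact this huw.symm hwx hux hwy huy (huw.symm.lt_of_le (not_lt.mp hlt))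
  by_contra hxy
  wlog hxy' : x < y generalizing x y
  · exact this huy hwy hux hwx (Ne.symm hxy) ((Ne.symm hxy).lt_of_le (not_lt.mp hxy'))
  rcases lt_or_gt_of_ne hwy.ne with hwy' | hyw'
  · exact huw (h huy.symm hwy.symm (hlt.trans hwy') hwy')
  · exact hxy (h hwx hwy (hxy'.trans hyw') hyw')

theorem card_inter_neighborFinset_le_one [Fintype V] [DecidableRel G.Adj]
    (h : AtMostOneLowerNeighbor G) {u w : V} (huw : u ≠ w) :
    #(G.neighborFinset u ∩ G.neighborFinset w) ≤ 1 :=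
  card_le_one.mpr fun x hx y hy => by
    simp only [mem_inter, mem_neighborFinset] at hx hy
    exact h.eq_of_adj_of_adj huw hx.1 hx.2 hy.1 hy.2

end AtMostOneLowerNeighbor

section
variable {V : Type*} [Fintype V] (G : SimpleGraph V) [DecidableRel G.Adj]

theorem adjMat_eq_adjMatrix : adjMat G = G.adjMatrix ℝ := by
  ext u w
  simp only [adjMat, of_apply, adjMatrix_apply]
  congr

variable [DecidableEq V]

theorem adjMatrix_mul_self_apply (u w : V) :
    (G.adjMatrix ℝ * G.adjMatrix ℝ) u w = #(G.neighborFinset u ∩ G.neighborFinset w) := by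
  rw [adjMatrix_mul_apply, ← filter_mem_eq_inter]
  simp [adjMatrix_apply, sum_boole, mem_neighborFinset, adj_comm]

theorem spectralMoment_one : spectralMoment G 1 = 0 := by
  rw [spectralMoment, pow_one, adjMat_eq_adjMatrix, trace_adjMatrix]

theorem spectralMoment_two : spectralMoment G 2 = ∑ v, (G.degree v : ℝ) := by
  simp only [spectralMoment, adjMat_eq_adjMatrix, sq, trace, diag_apply,
    adjMatrix_mul_self_apply_self]

variable {G} in
theorem spectralMoment_three_of_cliqueFree (h : G.CliqueFree 3) : spectralMoment G 3 = 0 := by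
  have hC : ∀ u w, G.Adj u w → (G.adjMatrix ℝ * G.adjMatrix ℝ) w u = 0 := by
    intro u w huw
    rw [adjMatrix_mul_self_apply, Nat.cast_eq_zero, card_eq_zero, eq_empty_iff_forall_notMem]
    intro x hx
    simp only [mem_inter, mem_neighborFinset] at hx
    exact h {u, w, x} (is3Clique_triple_iff.mpr ⟨huw, hx.2, hx.1⟩)
  rw [spectralMoment, adjMat_eq_adjMatrix, pow_three, trace]
  simp only [diag_apply, adjMatrix_mul_apply G (G.adjMatrix ℝ * G.adjMatrix ℝ)]
  exact sum_eq_zero fun u _ => sum_eq_zero fun w hw => hC u w ((mem_neighborFinset G u w).mp hw)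

variable {G} in
theorem spectralMoment_four
    (h : ∀ u w, u ≠ w → #(G.neighborFinset u ∩ G.neighborFinset w) ≤ 1) :
    spectralMoment G 4 = ∑ v, (2 * (G.degree v : ℝ) ^ 2 - G.degree v) := by
  set A := G.adjMatrix ℝ
  have hsym : ∀ u w, (A * A) w u = (A * A) u w := by
    intro u w; rw [adjMatrix_mul_self_apply, adjMatrix_mul_self_apply, inter_comm]
  have hdiag : ∀ u, (A * A) u u = G.degree u := adjMatrix_mul_self_apply_self G
  have hoff : ∀ u w, u ≠ w → (A * A) u w ^ 2 - (A * A) u w = 0 := by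
    intro u w huw
    rw [adjMatrix_mul_self_apply]
    rcases Nat.le_one_iff_eq_zero_or_eq_one.mp (h u w huw) with h0 | h1 <;> simp [*]
  have htotal : ∑ u, ∑ w, (A * A) u w = ∑ v, (G.degree v : ℝ) ^ 2 := by
    calc ∑ u, ∑ w, (A * A) u w = 1 ⬝ᵥ ((A * A) *ᵥ 1) := by simp [dotProduct, mulVec]
      _ = (1 ᵥ* A) ⬝ᵥ (A *ᵥ 1) := by rw [← mulVec_mulVec, dotProduct_mulVec]
      _ = ∑ v, (G.degree v : ℝ) ^ 2 := by simp [A, dotProduct, sq]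
  calc spectralMoment G 4 = ∑ u, ∑ w, (A * A) u w ^ 2 := by
        rw [spectralMoment, adjMat_eq_adjMatrix, show A ^ 4 = (A * A) * (A * A) by noncomm_ring]
        refine sum_congr rfl fun u _ => ?_
        rw [diag_apply, mul_apply]
        exact sum_congr rfl fun w _ => by rw [hsym u w, sq]
    _ = ∑ u, ∑ w, (A * A) u w + ∑ u, ∑ w, ((A * A) u w ^ 2 - (A * A) u w) := by
        rw [← sum_add_distrib]; simp
    _ = ∑ v, (2 * (G.degree v : ℝ) ^ 2 - G.degree v) := by
        rw [htotal, ← sum_add_distrib]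
        refine sum_congr rfl fun u _ => ?_
        rw [sum_eq_single u (fun w _ hwu => hoff u w hwu.symm) (by simp), hdiag]
        ring

end

theorem atMostOneLowerNeighbor_BTree (p q : ℕ) : AtMostOneLowerNeighbor (BTree p q 2 0) := by
  intro x y z hxy hxz hyx hzx
  simp only [BTree, fromRel_adj, ne_eq, Fin.ext_iff, Fin.lt_def] at *
  omega

theorem atMostOneLowerNeighbor_DTree (p q : ℕ) : AtMostOneLowerNeighbor (DTree p q 2 0) := by
  intro x y z hxy hxz hyx hzx
  simp only [DTree, fromRel_adj, ne_eq, Fin.ext_iff, Fin.lt_def] at *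
  omega

theorem degree_eq_card_of_forall_adj_iff {n : ℕ} {G : SimpleGraph (Fin n)} [DecidableRel G.Adj]
    {x : Fin n} (t : Finset ℕ) (ht : ∀ m ∈ t, m < n) (h : ∀ y, G.Adj x y ↔ y.val ∈ t) :
    G.degree x = #t := by
  rw [← card_neighborFinset_eq_degree, ← card_attachFin t ht]
  congr 1
  ext y
  simp [h]

def degreeSeqB (p q : ℕ) : ℕ → ℕ
  | 0 => q
  | 1 => p - 2
  | 2 => 3
  | _ + 3 => 1

def degreeSeqD (p q : ℕ) : ℕ → ℕ
  | 0 => q - 2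
  | 1 => p
  | 2 => 3
  | _ + 3 => 1

theorem degree_BTree {p q : ℕ} [DecidableRel (BTree p q 2 0).Adj] (hp : 3 ≤ p) (hq : 2 ≤ q)
    (x : Fin (p + q)) : (BTree p q 2 0).degree x = degreeSeqB p q x := by
  rcases x with ⟨_ | _ | _ | i, hx⟩ <;> simp only [degreeSeqB]
  · rw [degree_eq_card_of_forall_adj_iff (Icc 1 q) (fun m hm => by simp at hm; omega)
      (fun y => by simp [BTree, fromRel_adj, Fin.ext_iff]; omega), Nat.card_Icc, Nat.add_sub_cancel]
  · rw [degree_eq_card_of_forall_adj_iff (insert 0 (Ico (q + 3) (p + q)))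
      (fun m hm => by simp at hm; omega)
      (fun y => by simp [BTree, fromRel_adj, Fin.ext_iff]; omega),
      card_insert_of_notMem (by simp), Nat.card_Ico]
    omega
  · rw [degree_eq_card_of_forall_adj_iff (insert 0 (Icc (q + 1) (q + 2)))
      (fun m hm => by simp at hm; omega)
      (fun y => by simp [BTree, fromRel_adj, Fin.ext_iff]; omega),
      card_insert_of_notMem (by simp), Nat.card_Icc]
    omega
  · rw [degree_eq_card_of_forall_adj_iff {if i + 3 ≤ q then 0 else if i + 3 ≤ q + 2 then 2 else 1}
      (fun m hm => by simp at hm; split_ifs at hm <;> omega)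
      (fun y => by simp [BTree, fromRel_adj, Fin.ext_iff]; split_ifs <;> omega), card_singleton]

theorem degree_DTree {p q : ℕ} [DecidableRel (DTree p q 2 0).Adj] (hp : 2 ≤ p) (hq : 3 ≤ q)
    (x : Fin (p + q)) : (DTree p q 2 0).degree x = degreeSeqD p q x := by
  rcases x with ⟨_ | _ | _ | i, hx⟩ <;> simp only [degreeSeqD]
  · rw [degree_eq_card_of_forall_adj_iff (insert 1 (Ico (p + 3) (p + q)))
      (fun m hm => by simp at hm; omega)
      (fun y => by simp [DTree, fromRel_adj, Fin.ext_iff]; omega),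
      card_insert_of_notMem (by simp), Nat.card_Ico]
    omega
  · rw [degree_eq_card_of_forall_adj_iff (insert 0 (Icc 2 p)) (fun m hm => by simp at hm; omega)
      (fun y => by simp [DTree, fromRel_adj, Fin.ext_iff]; omega), card_insert_of_notMem (by simp),
      Nat.card_Icc]
    omega
  · rw [degree_eq_card_of_forall_adj_iff (insert 1 (Icc (p + 1) (p + 2)))
      (fun m hm => by simp at hm; omega)
      (fun y => by simp [DTree, fromRel_adj, Fin.ext_iff]; omega),
      card_insert_of_notMem (by simp; omega), Nat.card_Icc]
    omega
  · rw [degree_eq_card_of_forall_adj_iff {if i + 3 ≤ p then 1 else if i + 3 ≤ p + 2 then 2 else 0}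
      (fun m hm => by simp at hm; split_ifs at hm <;> omega)
      (fun y => by simp [DTree, fromRel_adj, Fin.ext_iff]; split_ifs <;> omega), card_singleton]

theorem sum_range_eq_of_forall_add_three {n : ℕ} (hn : 3 ≤ n) (f : ℕ → ℝ) {c : ℝ}
    (hf : ∀ i, f (i + 3) = c) : ∑ i ∈ range n, f i = f 0 + f 1 + f 2 + (n - 3 : ℕ) * c := by
  obtain ⟨m, rfl⟩ := Nat.exists_eq_add_of_le' hn
  simp only [sum_range_succ', Nat.add_sub_cancel, hf, sum_const, card_range, nsmul_eq_mul]
  ring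

theorem sum_degree_BTree_sub_sum_degree_DTree {p q : ℕ} [DecidableRel (BTree p q 2 0).Adj]
    [DecidableRel (DTree p q 2 0).Adj] (hp : 3 ≤ p) (hq : 3 ≤ q) (F : ℕ → ℝ) :
    ∑ x, F ((BTree p q 2 0).degree x) - ∑ x, F ((DTree p q 2 0).degree x)
      = F q + F (p - 2) - F p - F (q - 2) := by
  simp only [degree_BTree hp (by omega : 2 ≤ q), degree_DTree (by omega : 2 ≤ p) hq]
  rw [Fin.sum_univ_eq_sum_range (fun i => F (degreeSeqB p q i)),
    Fin.sum_univ_eq_sum_range (fun i => F (degreeSeqD p q i)),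
    sum_range_eq_of_forall_add_three (c := F 1) (by omega) _ fun _ => rfl,
    sum_range_eq_of_forall_add_three (c := F 1) (by omega) _ fun _ => rfl]
  simp only [degreeSeqB, degreeSeqD]
  ring

theorem spectralMoment_DTree_eq_spectralMoment_BTree {p q : ℕ} (hp : 3 ≤ p) (hq : 3 ≤ q) {i : ℕ}
    (hi : i < 4) : spectralMoment (DTree p q 2 0) i = spectralMoment (BTree p q 2 0) i := by
  classical
  interval_cases i
  · simp only [spectralMoment, pow_zero]
  · rw [spectralMoment_one, spectralMoment_one]
  · rw [spectralMoment_two, spectralMoment_two, eq_comm, ← sub_eq_zero,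
      sum_degree_BTree_sub_sum_degree_DTree hp hq Nat.cast, Nat.cast_sub (by omega),
      Nat.cast_sub (by omega)]
    ring
  · rw [spectralMoment_three_of_cliqueFree (atMostOneLowerNeighbor_DTree p q).cliqueFree_three,
      spectralMoment_three_of_cliqueFree (atMostOneLowerNeighbor_BTree p q).cliqueFree_three]

theorem spectralMoment_BTree_four_sub_spectralMoment_DTree_four {p q : ℕ} (hp : 3 ≤ p)
    (hq : 3 ≤ q) : spectralMoment (BTree p q 2 0) 4 - spectralMoment (DTree p q 2 0) 4
      = 8 * ((q : ℝ) - p) := by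
  classical
  have hB := atMostOneLowerNeighbor_BTree p q
  have hD := atMostOneLowerNeighbor_DTree p q
  rw [spectralMoment_four fun _ _ => hB.card_inter_neighborFinset_le_one,
    spectralMoment_four fun _ _ => hD.card_inter_neighborFinset_le_one,
    sum_degree_BTree_sub_sum_degree_DTree hp hq fun d => 2 * (d : ℝ) ^ 2 - d,
    Nat.cast_sub (by omega), Nat.cast_sub (by omega)]
  push_cast
  ring

/-- For `4 ≤ p < q` and `n = p + q`:
`S_i(D_{p,q}^{2,0}) = S_i(B_{p,q}^{2,0})` for `i = 0,1,2,3`, and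
`S_4(B_{p,q}^{2,0}) - S_4(D_{p,q}^{2,0}) = 8(q - p) > 0`; in particular
`D_{p,q}^{2,0} ≺_s B_{p,q}^{2,0}`. -/
theorem stmt_16 (p q : ℕ) (hp : 4 ≤ p) (hpq : p < q) :
    (∀ i < 4, spectralMoment (DTree p q 2 0) i = spectralMoment (BTree p q 2 0) i) ∧
    spectralMoment (BTree p q 2 0) 4 - spectralMoment (DTree p q 2 0) 4
      = 8 * ((q : ℝ) - (p : ℝ)) ∧
    0 < spectralMoment (BTree p q 2 0) 4 - spectralMoment (DTree p q 2 0) 4 ∧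
    SLt (DTree p q 2 0) (BTree p q 2 0) := by
  have hlow : ∀ i < 4, spectralMoment (DTree p q 2 0) i = spectralMoment (BTree p q 2 0) i :=
    fun i hi => spectralMoment_DTree_eq_spectralMoment_BTree (by omega) (by omega) hi
  have hfour := spectralMoment_BTree_four_sub_spectralMoment_DTree_four (p := p) (q := q)
    (by omega) (by omega)
  have hpos : 0 < spectralMoment (BTree p q 2 0) 4 - spectralMoment (DTree p q 2 0) 4 := by
    rw [hfour]
    have : (p : ℝ) < q := by exact_mod_cast hpq
    linarith
  exact ⟨hlow, hfour, hpos, 4, by norm_num, by simp only [Fintype.card_fin]; omega, hlow,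
    sub_pos.mp hpos⟩
end
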